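/- For every Borel measurable control law γ₁ : ℝ → ℝ and every Borel measurable function F : ℝ × ℝ → [0, ∞], the Witsenhausen pay-off expectation transforms under the reference measure as: E_P[ F(x₀, x₀ + γ₁(x₀) + v) ] = ∫_ℝ ∫_ℝ ( λ(y − x − γ₁(x)) / λ(y) ) · F(x, y) · (gaussianReal 0 1)(dy) μ₀(dx). In particular, taking F(x, y) = k² γ₁(x)² + (x + γ₁(x) − γ₂(y))², the pay-off J(γ₁, γ₂) equals the expectation, under the product measure making the observation y₁ a standard Gaussian independent of x₀, of the likelihood ratio λ(y₁ − x₀ − γ₁(x₀))/λ(y₁) times the cost. -/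
import Mathlib


open MeasureTheory ProbabilityTheory

/-- The standard normal density `λ(z) = (2π)^{-1/2} exp(-z²/2)`. -/
noncomputable def stdNormalDensity (z : ℝ) : ℝ :=
  (2 * Real.pi) ^ (-(1 : ℝ) / 2) * Real.exp (-z ^ 2 / 2)


lemma stdNormalDensity_eq (z : ℝ) : stdNormalDensity z = gaussianPDFReal 0 1 z := by
  rw [stdNormalDensity, gaussianPDFReal]
  have h2π : (0:ℝ) ≤ 2 * Real.pi := by positivity
  rw [show (-(1:ℝ)/2) = -(1/2) by ring, Real.rpow_neg h2π, ← Real.sqrt_eq_rpow]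
  norm_num

lemma stdNormalDensity_pos (z : ℝ) : 0 < stdNormalDensity z := by
  rw [stdNormalDensity_eq]; exact gaussianPDFReal_pos 0 1 z one_ne_zero

lemma measurable_stdNormalDensity : Measurable stdNormalDensity := by
  unfold stdNormalDensity; fun_prop

lemma key (c : ℝ) (g : ℝ → ENNReal) (hg : Measurable g) :
    ∫⁻ w, g (c + w) ∂(gaussianReal 0 1) =
      ∫⁻ y, ENNReal.ofReal (stdNormalDensity (y - c) / stdNormalDensity y) * g y
        ∂(gaussianReal 0 1) := by
  have hm : Measurable fun y =>
      ENNReal.ofReal (stdNormalDensity (y - c) / stdNormalDensity y) * g y := by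
    apply Measurable.mul _ hg
    apply Measurable.ennreal_ofReal
    exact (measurable_stdNormalDensity.comp (measurable_id.sub_const c)).div
      measurable_stdNormalDensity
  have h1 : Measurable fun w : ℝ => g (c + w) := hg.comp (measurable_const_add c)
  rw [gaussianReal_of_var_ne_zero 0 one_ne_zero,
    lintegral_withDensity_eq_lintegral_mul _ (measurable_gaussianPDF 0 1) h1,
    lintegral_withDensity_eq_lintegral_mul _ (measurable_gaussianPDF 0 1) hm]
  have := lintegral_add_right_eq_self
    (μ := (volume : Measure ℝ)) (fun y => gaussianPDF 0 1 (y - c) * g y) c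
  simp only [add_sub_cancel_right] at this
  simp only [Pi.mul_apply, add_comm c]
  rw [this]
  congr 1 with y
  have hpos := stdNormalDensity_pos y
  rw [gaussianPDF, gaussianPDF, ← stdNormalDensity_eq, ← stdNormalDensity_eq]
  rw [← mul_assoc, ← ENNReal.ofReal_mul hpos.le, mul_div_cancel₀ _ hpos.ne']

/-- **Change of measure for the Witsenhausen pay-off.**  If `x₀ ∼ μ₀` and
`v ∼ N(0,1)` are independent, then for every Borel `γ₁ : ℝ → ℝ` and every Borel
`F : ℝ × ℝ → [0,∞]`,
`E[F(x₀, x₀ + γ₁(x₀) + v)] = ∫∫ (λ(y − x − γ₁ x)/λ y) F(x,y) N(0,1)(dy) μ₀(dx)`;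
in particular the Witsenhausen pay-off `J(γ₁,γ₂)` equals the expectation, under the
product measure making the observation a standard Gaussian independent of `x₀`, of
the likelihood ratio times the cost. -/
theorem witsenhausen_change_of_measure
    {Ω : Type*} [MeasurableSpace Ω] (P : Measure Ω) [IsProbabilityMeasure P]
    (x0 v : Ω → ℝ) (hx0 : Measurable x0) (hv : Measurable v)
    (μ0 : Measure ℝ) (hx0law : P.map x0 = μ0)
    (hvlaw : P.map v = gaussianReal 0 1)
    (hindep : IndepFun x0 v P)
    (γ1 : ℝ → ℝ) (hγ1 : Measurable γ1) :
    (∀ F : ℝ × ℝ → ENNReal, Measurable F →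
      ∫⁻ ω, F (x0 ω, x0 ω + γ1 (x0 ω) + v ω) ∂P =
        ∫⁻ x, ∫⁻ y,
          ENNReal.ofReal (stdNormalDensity (y - x - γ1 x) / stdNormalDensity y) *
            F (x, y) ∂(gaussianReal 0 1) ∂μ0) ∧
    (∀ k : ℝ, ∀ γ2 : ℝ → ℝ, Measurable γ2 →
      ∫⁻ ω, ENNReal.ofReal (k ^ 2 * γ1 (x0 ω) ^ 2 +
          (x0 ω + γ1 (x0 ω) - γ2 (x0 ω + γ1 (x0 ω) + v ω)) ^ 2) ∂P =
        ∫⁻ x, ∫⁻ y,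
          ENNReal.ofReal (stdNormalDensity (y - x - γ1 x) / stdNormalDensity y) *
            ENNReal.ofReal (k ^ 2 * γ1 x ^ 2 + (x + γ1 x - γ2 y) ^ 2)
          ∂(gaussianReal 0 1) ∂μ0) := by
  have hjoint : P.map (fun ω => (x0 ω, v ω)) = μ0.prod (gaussianReal 0 1) := by
    rw [← hx0law, ← hvlaw]
    exact (indepFun_iff_map_prod_eq_prod_map_map hx0.aemeasurable hv.aemeasurable).mp hindep
  have main : ∀ F : ℝ × ℝ → ENNReal, Measurable F →
      ∫⁻ ω, F (x0 ω, x0 ω + γ1 (x0 ω) + v ω) ∂P =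
        ∫⁻ x, ∫⁻ y,
          ENNReal.ofReal (stdNormalDensity (y - x - γ1 x) / stdNormalDensity y) *
            F (x, y) ∂(gaussianReal 0 1) ∂μ0 := by
    intro F hF
    have hφ : Measurable fun p : ℝ × ℝ => F (p.1, p.1 + γ1 p.1 + p.2) := by
      apply hF.comp
      exact measurable_fst.prodMk ((measurable_fst.add (hγ1.comp measurable_fst)).add
        measurable_snd)
    calc ∫⁻ ω, F (x0 ω, x0 ω + γ1 (x0 ω) + v ω) ∂P
        = ∫⁻ p : ℝ × ℝ, F (p.1, p.1 + γ1 p.1 + p.2) ∂(μ0.prod (gaussianReal 0 1)) := by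
          rw [← hjoint, lintegral_map hφ (hx0.prodMk hv)]
      _ = ∫⁻ x, ∫⁻ w, F (x, x + γ1 x + w) ∂(gaussianReal 0 1) ∂μ0 :=
          lintegral_prod _ hφ.aemeasurable
      _ = ∫⁻ x, ∫⁻ y,
            ENNReal.ofReal (stdNormalDensity (y - x - γ1 x) / stdNormalDensity y) *
              F (x, y) ∂(gaussianReal 0 1) ∂μ0 := by
          refine lintegral_congr fun x => ?_
          have h := key (x + γ1 x) (fun y => F (x, y))
            (hF.comp (measurable_const.prodMk measurable_id))
          simpa [sub_sub] using h
  refine ⟨main, fun k γ2 hγ2 => ?_⟩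
  have hFm : Measurable fun p : ℝ × ℝ =>
      ENNReal.ofReal (k ^ 2 * γ1 p.1 ^ 2 + (p.1 + γ1 p.1 - γ2 p.2) ^ 2) := by
    apply Measurable.ennreal_ofReal
    apply Measurable.add
    · exact (measurable_const.mul ((hγ1.comp measurable_fst).pow_const 2))
    · exact (((measurable_fst.add (hγ1.comp measurable_fst)).sub
        (hγ2.comp measurable_snd)).pow_const 2)
  exact main _ hFm
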